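/- Any anonymization of an attribute with distinct values is functionally equivalent to a permutation step followed by rank-preserving residual noise addition: for any injective x, y : {1,...,n} → ℝ, there exists z : {1,...,n} → ℝ such that (i) z is a permutation of x (there is a permutation σ of {1,...,n} with z_i = x_{σ(i)} for all i), (ii) z has the same rank order as y (for all i, j: z_i < z_j iff y_i < y_j), and (iii) the noise e_i = y_i - z_i added to z to obtain y is residual, i.e., adding it does not change any ranks (for all i, j: z_i + e_i < z_j + e_j iff z_i < z_j). -/
import Mathlib


/-- **Permutation paradigm: any anonymization is functionally equivalent to a
permutation step followed by rank-preserving residual noise addition.**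
For any injective `x, y : Fin n → ℝ` (an original attribute and its
anonymized version, with distinct values), there exists `z : Fin n → ℝ` such
that: (i) `z` is a permutation of `x` (there is a permutation `σ` of the
indices with `z i = x (σ i)` for all `i`); (ii) `z` has the same rank order
as `y` (for all `i, j`, `z i < z j ↔ y i < y j`); and (iii) the noise
`e i = y i - z i` added to `z` to obtain `y` is residual: adding it does not
change any ranks (for all `i, j`, `z i + e i < z j + e j ↔ z i < z j`). -/
theorem anonymization_eq_permutation_plus_residual_noise
    {n : ℕ} (x y : Fin n → ℝ)
    (hx : Function.Injective x) (hy : Function.Injective y) :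
    ∃ z : Fin n → ℝ,
      (∃ σ : Equiv.Perm (Fin n), ∀ i, z i = x (σ i)) ∧
      (∀ i j, z i < z j ↔ y i < y j) ∧
      (∀ i j, z i + (y i - z i) < z j + (y j - z j) ↔ z i < z j) := by
  classical
  set s : Finset ℝ := Finset.univ.image x with hs
  set t : Finset ℝ := Finset.univ.image y with ht
  have hsc : s.card = n := by
    rw [hs, Finset.card_image_of_injective _ hx, Finset.card_univ, Fintype.card_fin]
  have htc : t.card = n := by
    rw [ht, Finset.card_image_of_injective _ hy, Finset.card_univ, Fintype.card_fin]
  let e := s.orderIsoOfFin hsc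
  let g := t.orderIsoOfFin htc
  have hyt : ∀ i, y i ∈ t := fun i => Finset.mem_image_of_mem _ (Finset.mem_univ i)
  have hxs : ∀ i, x i ∈ s := fun i => Finset.mem_image_of_mem _ (Finset.mem_univ i)
  let r : Fin n → Fin n := fun i => g.symm ⟨y i, hyt i⟩
  let z : Fin n → ℝ := fun i => (e (r i) : ℝ)
  have hgr : ∀ i, (g (r i) : ℝ) = y i := by
    intro i
    show ((g (g.symm ⟨y i, hyt i⟩) : {v // v ∈ t}) : ℝ) = y i
    rw [g.apply_symm_apply]
  have hrank : ∀ i j, z i < z j ↔ y i < y j := by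
    intro i j
    have h1 : z i < z j ↔ r i < r j := by
      constructor
      · intro h
        by_contra hc
        push_neg at hc
        exact absurd (show z j ≤ z i from e.le_iff_le.mpr hc) (not_le.mpr h)
      · intro h; exact e.lt_iff_lt.mpr h
    have h2 : r i < r j ↔ y i < y j := by
      rw [← g.lt_iff_lt]
      constructor
      · intro h
        have := Subtype.coe_lt_coe.mpr h
        rwa [hgr i, hgr j] at this
      · intro h
        apply Subtype.coe_lt_coe.mp
        rwa [hgr i, hgr j]
    rw [h1, h2]
  refine ⟨z, ?_, hrank, ?_⟩
  · -- z is a permutation of x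
    have hcard : Fintype.card s = n := by rw [Fintype.card_coe, hsc]
    have hxinj : Function.Injective (fun i : Fin n => (⟨x i, hxs i⟩ : s)) := by
      intro i j h
      exact hx (congrArg Subtype.val h)
    have hxbij : Function.Bijective (fun i : Fin n => (⟨x i, hxs i⟩ : s)) :=
      (Fintype.bijective_iff_injective_and_card _).mpr ⟨hxinj, by rw [Fintype.card_fin, hcard]⟩
    let x' : Fin n ≃ s := Equiv.ofBijective _ hxbij
    have hrinj : Function.Injective r := by
      intro i j h
      have : (⟨y i, hyt i⟩ : t) = ⟨y j, hyt j⟩ := g.symm.injective h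
      exact hy (congrArg Subtype.val this)
    let r' : Fin n ≃ Fin n := Equiv.ofBijective r (Finite.injective_iff_bijective.mp hrinj)
    refine ⟨r'.trans (e.toEquiv.trans x'.symm), fun i => ?_⟩
    have : x' (x'.symm (e (r' i))) = e (r' i) := x'.apply_symm_apply _
    have hcoe : x (x'.symm (e (r' i))) = (e (r' i) : ℝ) := congrArg Subtype.val this
    show z i = x (x'.symm (e (r' i)))
    rw [hcoe]
    rfl
  · intro i j
    simp only [add_sub_cancel]
    exact (hrank i j).symm
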